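/- Let W₁ : 𝒳 → 𝒴 and W₂ : 𝒳 → 𝒵 be discrete memoryless channels with W₂ ⪯ W₁ and common input distribution P_X in the multilevel polar construction with block length N = 2^n and threshold δ_N = 2^{−N^β}. Then the polarization index sets satisfy the inclusion chain 𝓛_X ⊆ 𝓛_{X|Z} ⊆ 𝓛_{X|Y}. -/
import Mathlib


open scoped BigOperators Classical
open Filter Topology

noncomputable section

namespace PolarWiretap

variable {Ω α γ 𝒱 : Type*}

/-- Probability mass assigned by the weight function `p` to the value `a`
of the random variable `X` (the distribution of `X`). -/
def dist [Fintype Ω] (p : Ω → ℝ) (X : Ω → α) (a : α) : ℝ :=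
  ∑ ω, if X ω = a then p ω else 0

/-- Probability of the event `E` under the weight function `p`. -/
def pr [Fintype Ω] (p : Ω → ℝ) (E : Ω → Prop) : ℝ :=
  ∑ ω, if E ω then p ω else 0

/-- Shannon entropy (in bits) of the random variable `X` under `p`. -/
def H [Fintype Ω] [Fintype α] (p : Ω → ℝ) (X : Ω → α) : ℝ :=
  ∑ a, -(dist p X a * Real.logb 2 (dist p X a))

/-- Conditional Shannon entropy `H(X|Y) = H(X,Y) − H(Y)` (in bits). -/
def condH [Fintype Ω] [Fintype α] [Fintype γ] (p : Ω → ℝ) (X : Ω → α) (Y : Ω → γ) : ℝ :=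
  H p (fun ω => (X ω, Y ω)) - H p Y

/-- Mutual information `I(X;Y) = H(X) + H(Y) − H(X,Y)` (in bits). -/
def MI [Fintype Ω] [Fintype α] [Fintype γ] (p : Ω → ℝ) (X : Ω → α) (Y : Ω → γ) : ℝ :=
  H p X + H p Y - H p (fun ω => (X ω, Y ω))

/-- Bhattacharyya parameter
`Z_B(T|V) = 2 ∑_v √(P_{T,V}(0,v) · P_{T,V}(1,v))` of a binary random variable `T`
given the side information `V`. -/
def ZB [Fintype Ω] [Fintype 𝒱] (p : Ω → ℝ) (T : Ω → ZMod 2) (V : Ω → 𝒱) : ℝ :=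
  2 * ∑ v, Real.sqrt (dist p (fun ω => (T ω, V ω)) (0, v) *
      dist p (fun ω => (T ω, V ω)) (1, v))

/-- `p` is a probability mass function on the finite type `Ω`. -/
def IsPMF [Fintype Ω] (p : Ω → ℝ) : Prop := (∀ ω, 0 ≤ p ω) ∧ ∑ ω, p ω = 1

/-- `W` is a (discrete memoryless) channel: a stochastic matrix. -/
def IsChannel {𝒳 𝒴 : Type*} [Fintype 𝒴] (W : 𝒳 → 𝒴 → ℝ) : Prop :=
  (∀ x y, 0 ≤ W x y) ∧ ∀ x, ∑ y, W x y = 1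

/-- `W₂` is degraded with respect to `W₁` (`W₂ ⪯ W₁`): there is a channel `W̃`
with `W₂(z|x) = ∑_y W₁(y|x)·W̃(z|y)`. -/
def Degraded {𝒳 𝒴 𝒵 : Type*} [Fintype 𝒴] [Fintype 𝒵]
    (W₂ : 𝒳 → 𝒵 → ℝ) (W₁ : 𝒳 → 𝒴 → ℝ) : Prop :=
  ∃ Wt : 𝒴 → 𝒵 → ℝ, IsChannel Wt ∧ ∀ x z, W₂ x z = ∑ y, W₁ x y * Wt y z

/-- The binary entropy function `h₂(x) = −x log₂ x − (1−x) log₂ (1−x)`. -/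
def h2 (x : ℝ) : ℝ := -(x * Real.logb 2 x) - (1 - x) * Real.logb 2 (1 - x)

/-- The single-letter joint distribution of an input `X ~ P_X` and the output of
the channel `W` fed with `X`: `P(x,y) = P_X(x)·W(y|x)`. -/
def slP {𝒳 𝒴 : Type*} (PX : 𝒳 → ℝ) (W : 𝒳 → 𝒴 → ℝ) : 𝒳 × 𝒴 → ℝ :=
  fun a => PX a.1 * W a.1 a.2


/-- Entry `(i,j)` of the polar generator matrix `G_N = B_N · G^{⊗n}` over `𝔽₂`,
where `G = [[1,0],[1,1]]`, `G^{⊗n}` is the `n`-th Kronecker power and `B_N` the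
bit-reversal permutation (`N = 2^n`). -/
def GN (n : ℕ) (i j : Fin (2 ^ n)) : ZMod 2 :=
  if ∀ k < n, Nat.testBit j.val k → Nat.testBit i.val (n - 1 - k) then 1 else 0

variable {𝒳 𝒴 𝒵 : Type*}

/-- The i.i.d. distribution `P(x) = ∏_i P_X(x_i)` of `N = 2^n` input symbols. -/
def codeX [Fintype 𝒳] (PX : 𝒳 → ℝ) (n : ℕ) : (Fin (2 ^ n) → 𝒳) → ℝ :=
  fun x => ∏ i, PX (x i)

/-- The joint distribution of `N = 2^n` i.i.d. inputs `X_i ∼ P_X` together with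
the outputs of `N` independent uses of the channel `W`. -/
def codeP [Fintype 𝒳] [Fintype 𝒴] (PX : 𝒳 → ℝ) (W : 𝒳 → 𝒴 → ℝ) (n : ℕ) :
    ((Fin (2 ^ n) → 𝒳) × (Fin (2 ^ n) → 𝒴)) → ℝ :=
  fun ω => (∏ i, PX (ω.1 i)) * ∏ i, W (ω.1 i) (ω.2 i)

/-- The `l`-th label bit `B_j^l` of the `j`-th symbol, via the bit labeling `f`. -/
def Bbit {q : ℕ} (f : (Fin q → ZMod 2) ≃ 𝒳) (n : ℕ) (x : Fin (2 ^ n) → 𝒳)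
    (j : Fin (2 ^ n)) (l : Fin q) : ZMod 2 :=
  f.symm (x j) l

/-- The polar-transformed bit `U_i^l` at level `l`:  `U^l = B^l · G_N`
(recall `G_N` is its own inverse, so this inverts `B^l = U^l · G_N`). -/
def Ubit {q : ℕ} (f : (Fin q → ZMod 2) ≃ 𝒳) (n : ℕ) (x : Fin (2 ^ n) → 𝒳)
    (l : Fin q) (i : Fin (2 ^ n)) : ZMod 2 :=
  ∑ j, Bbit f n x j l * GN n j i

/-- The value space of the side information
`V_i^l = (U^l_{[i−1]}, B^{[l−1]}_{[N]})`. -/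
abbrev VType (q n : ℕ) (l : Fin q) (i : Fin (2 ^ n)) : Type :=
  ({j : Fin (2 ^ n) // j < i} → ZMod 2) × (Fin (2 ^ n) → {k : Fin q // k < l} → ZMod 2)

/-- The side information `V_i^l = (U^l_{[i−1]}, B^{[l−1]}_{[N]})`: the previous
bits of level `l` together with all label bits of the lower levels. -/
def Vval {q : ℕ} (f : (Fin q → ZMod 2) ≃ 𝒳) (n : ℕ) (x : Fin (2 ^ n) → 𝒳)
    (l : Fin q) (i : Fin (2 ^ n)) : VType q n l i :=
  (fun j => Ubit f n x l j.1, fun j k => Bbit f n x j k.1)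

/-- The polarization threshold `δ_N = 2^{−N^β}`, `N = 2^n`. -/
noncomputable def deltaN (β : ℝ) (n : ℕ) : ℝ := (2 : ℝ) ^ (-((2 ^ n : ℝ) ^ β))

/-- The Bhattacharyya parameter `Z_B(U_i^l | V_i^l)` (no channel output). -/
def ZBplain [Fintype 𝒳] {q : ℕ} (PX : 𝒳 → ℝ) (f : (Fin q → ZMod 2) ≃ 𝒳)
    (n : ℕ) (l : Fin q) (i : Fin (2 ^ n)) : ℝ :=
  ZB (codeX PX n) (fun x => Ubit f n x l i) (fun x => Vval f n x l i)

/-- The Bhattacharyya parameter `Z_B(U_i^l | V_i^l, Y)` with the channel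
output vector `Y` of `W` as extra side information. -/
def ZBout [Fintype 𝒳] [Fintype 𝒴] {q : ℕ} (PX : 𝒳 → ℝ) (W : 𝒳 → 𝒴 → ℝ)
    (f : (Fin q → ZMod 2) ≃ 𝒳) (n : ℕ) (l : Fin q) (i : Fin (2 ^ n)) : ℝ :=
  ZB (codeP PX W n) (fun ω => Ubit f n ω.1 l i) (fun ω => (Vval f n ω.1 l i, ω.2))

/-- `𝓛_X = {(l,i) : Z_B(U_i^l | V_i^l) < δ_N}`. -/
def Lplain [Fintype 𝒳] {q : ℕ} (PX : 𝒳 → ℝ) (f : (Fin q → ZMod 2) ≃ 𝒳)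
    (β : ℝ) (n : ℕ) : Set (Fin q × Fin (2 ^ n)) :=
  {a | ZBplain PX f n a.1 a.2 < deltaN β n}

/-- `𝓗_X = {(l,i) : Z_B(U_i^l | V_i^l) > 1 − δ_N}`. -/
def Hplain [Fintype 𝒳] {q : ℕ} (PX : 𝒳 → ℝ) (f : (Fin q → ZMod 2) ≃ 𝒳)
    (β : ℝ) (n : ℕ) : Set (Fin q × Fin (2 ^ n)) :=
  {a | 1 - deltaN β n < ZBplain PX f n a.1 a.2}

/-- `𝓛_{X|Y} = {(l,i) : Z_B(U_i^l | V_i^l, Y) < δ_N}` (for the channel `W`). -/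
def Lout [Fintype 𝒳] [Fintype 𝒴] {q : ℕ} (PX : 𝒳 → ℝ) (W : 𝒳 → 𝒴 → ℝ)
    (f : (Fin q → ZMod 2) ≃ 𝒳) (β : ℝ) (n : ℕ) : Set (Fin q × Fin (2 ^ n)) :=
  {a | ZBout PX W f n a.1 a.2 < deltaN β n}

/-- `𝓗_{X|Y} = {(l,i) : Z_B(U_i^l | V_i^l, Y) > 1 − δ_N}` (for the channel `W`). -/
def Hout [Fintype 𝒳] [Fintype 𝒴] {q : ℕ} (PX : 𝒳 → ℝ) (W : 𝒳 → 𝒴 → ℝ)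
    (f : (Fin q → ZMod 2) ≃ 𝒳) (β : ℝ) (n : ℕ) : Set (Fin q × Fin (2 ^ n)) :=
  {a | 1 - deltaN β n < ZBout PX W f n a.1 a.2}



/-- Row sums of a product channel are `1`. -/
lemma prodK_sum_one {𝒜 ℬ : Type*} [Fintype ℬ] (W : 𝒜 → ℬ → ℝ)
    (hW : ∀ a, ∑ b, W a b = 1) (n : ℕ) (x : Fin (2 ^ n) → 𝒜) :
    ∑ y : Fin (2 ^ n) → ℬ, ∏ i, W (x i) (y i) = 1 := by
  rw [← Fintype.piFinset_univ, ← Finset.prod_univ_sum]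
  exact Finset.prod_eq_one fun i _ => hW (x i)

/-- Product-channel form of degradedness. -/
lemma prod_sum_degrade {𝒳 𝒴 𝒵 : Type*} [Fintype 𝒴]
    (W₁ : 𝒳 → 𝒴 → ℝ) (Wt : 𝒴 → 𝒵 → ℝ) (W₂ : 𝒳 → 𝒵 → ℝ)
    (h : ∀ x z, W₂ x z = ∑ y, W₁ x y * Wt y z) (n : ℕ)
    (x : Fin (2 ^ n) → 𝒳) (z : Fin (2 ^ n) → 𝒵) :
    ∏ j, W₂ (x j) (z j)
      = ∑ y : Fin (2 ^ n) → 𝒴, (∏ j, W₁ (x j) (y j)) * ∏ j, Wt (y j) (z j) := by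
  calc ∏ j, W₂ (x j) (z j) = ∏ j, ∑ y, W₁ (x j) y * Wt y (z j) :=
        Finset.prod_congr rfl fun j _ => h (x j) (z j)
    _ = ∑ g ∈ Fintype.piFinset (fun _ : Fin (2 ^ n) => (Finset.univ : Finset 𝒴)),
          ∏ j, W₁ (x j) (g j) * Wt (g j) (z j) := Finset.prod_univ_sum _ _
    _ = ∑ g : Fin (2 ^ n) → 𝒴, (∏ j, W₁ (x j) (g j)) * ∏ j, Wt (g j) (z j) := by
        rw [Fintype.piFinset_univ]
        exact Finset.sum_congr rfl fun g _ => Finset.prod_mul_distrib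

/-- Cauchy–Schwarz: `∑ √(aᵢ·bᵢ) ≤ √(∑aᵢ · ∑bᵢ)` for nonnegative sequences. -/
lemma sum_sqrt_mul_le {ι : Type*} [Fintype ι] (a b : ι → ℝ)
    (ha : ∀ i, 0 ≤ a i) (hb : ∀ i, 0 ≤ b i) :
    ∑ i, Real.sqrt (a i * b i) ≤ Real.sqrt ((∑ i, a i) * (∑ i, b i)) := by
  have h0 : 0 ≤ ∑ i, Real.sqrt (a i * b i) :=
    Finset.sum_nonneg fun i _ => Real.sqrt_nonneg _
  have h1 : 0 ≤ (∑ i, a i) * (∑ i, b i) :=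
    mul_nonneg (Finset.sum_nonneg fun i _ => ha i) (Finset.sum_nonneg fun i _ => hb i)
  rw [Real.le_sqrt h0 h1]
  exact Finset.sum_sq_le_sum_mul_sum_of_sq_eq_mul _ (fun i _ => ha i) (fun i _ => hb i)
    (fun i _ => Real.sq_sqrt (mul_nonneg (ha i) (hb i)))

section Master

variable {Ω 𝒴 𝒵 𝒱' : Type*} [Fintype Ω] [Fintype 𝒴] [Fintype 𝒵] [Fintype 𝒱']

/-- The joint sub-distribution of `(T, V)` restricted through a kernel value. -/
private def Aker (p : Ω → ℝ) (K : Ω → 𝒴 → ℝ) (T : Ω → ZMod 2) (V : Ω → 𝒱')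
    (b : ZMod 2) (v : 𝒱') (y : 𝒴) : ℝ :=
  ∑ ω, if T ω = b ∧ V ω = v then p ω * K ω y else 0

private lemma Aker_nonneg (p : Ω → ℝ) (hp : ∀ ω, 0 ≤ p ω)
    (K : Ω → 𝒴 → ℝ) (hK : ∀ ω y, 0 ≤ K ω y) (T : Ω → ZMod 2) (V : Ω → 𝒱')
    (b : ZMod 2) (v : 𝒱') (y : 𝒴) : 0 ≤ Aker p K T V b v y := by
  refine Finset.sum_nonneg fun ω _ => ?_
  split_ifs
  · exact mul_nonneg (hp ω) (hK ω y)
  · exact le_rfl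

private lemma dist_joint_eq (p : Ω → ℝ) (K : Ω → 𝒴 → ℝ) (T : Ω → ZMod 2) (V : Ω → 𝒱')
    (b : ZMod 2) (v : 𝒱') (y : 𝒴) :
    dist (fun ωy : Ω × 𝒴 => p ωy.1 * K ωy.1 ωy.2)
      (fun ωy : Ω × 𝒴 => ((T ωy.1, (V ωy.1, ωy.2)) : ZMod 2 × (𝒱' × 𝒴))) (b, (v, y))
      = Aker p K T V b v y := by
  unfold dist Aker
  simp only [Fintype.sum_prod_type]
  refine Finset.sum_congr rfl fun ω _ => ?_
  by_cases h : T ω = b ∧ V ω = v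
  · rw [if_pos h]
    have : ∀ y' : 𝒴, (if ((T ω, (V ω, y')) : ZMod 2 × (𝒱' × 𝒴)) = (b, (v, y))
        then p ω * K ω y' else 0) = if y' = y then p ω * K ω y' else 0 := by
      intro y'; congr 1
      simp [Prod.ext_iff, h.1, h.2]
    rw [Finset.sum_congr rfl fun y' _ => this y']
    simp
  · rw [if_neg h]
    refine Finset.sum_eq_zero fun y' _ => ?_
    rw [if_neg]
    intro hc
    exact h ⟨(Prod.ext_iff.1 hc).1, (Prod.ext_iff.1 (Prod.ext_iff.1 hc).2).1⟩

private lemma dist_plain_eq (p : Ω → ℝ) (K : Ω → 𝒴 → ℝ) (hK1 : ∀ ω, ∑ y, K ω y = 1)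
    (T : Ω → ZMod 2) (V : Ω → 𝒱') (b : ZMod 2) (v : 𝒱') :
    dist p (fun ω => ((T ω, V ω) : ZMod 2 × 𝒱')) (b, v) = ∑ y, Aker p K T V b v y := by
  unfold dist Aker
  rw [Finset.sum_comm]
  refine Finset.sum_congr rfl fun ω _ => ?_
  by_cases h : T ω = b ∧ V ω = v
  · have hc : ((T ω, V ω) : ZMod 2 × 𝒱') = (b, v) := by simp [h.1, h.2]
    rw [if_pos hc]
    simp only [if_pos h]
    rw [← Finset.mul_sum, hK1 ω, mul_one]
  · have hc : ¬ (((T ω, V ω) : ZMod 2 × 𝒱') = (b, v)) := by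
      intro hc; exact h ⟨(Prod.ext_iff.1 hc).1, (Prod.ext_iff.1 hc).2⟩
    rw [if_neg hc]
    simp only [if_neg h, Finset.sum_const_zero]

/-- Extra side information from a channel output can only decrease `Z_B`. -/
lemma ZB_cond_le (p : Ω → ℝ) (hp : ∀ ω, 0 ≤ p ω)
    (K : Ω → 𝒴 → ℝ) (hK0 : ∀ ω y, 0 ≤ K ω y) (hK1 : ∀ ω, ∑ y, K ω y = 1)
    (T : Ω → ZMod 2) (V : Ω → 𝒱') :
    ZB (fun ωy : Ω × 𝒴 => p ωy.1 * K ωy.1 ωy.2)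
      (fun ωy => T ωy.1) (fun ωy => (V ωy.1, ωy.2)) ≤ ZB p T V := by
  unfold ZB
  have h2 : (0:ℝ) ≤ 2 := by norm_num
  refine mul_le_mul_of_nonneg_left ?_ h2
  simp only [Fintype.sum_prod_type]
  calc ∑ v, ∑ y, Real.sqrt
        (dist (fun ωy : Ω × 𝒴 => p ωy.1 * K ωy.1 ωy.2)
          (fun ωy => ((T ωy.1, (V ωy.1, ωy.2)) : ZMod 2 × (𝒱' × 𝒴))) (0, (v, y)) *
         dist (fun ωy : Ω × 𝒴 => p ωy.1 * K ωy.1 ωy.2)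
          (fun ωy => ((T ωy.1, (V ωy.1, ωy.2)) : ZMod 2 × (𝒱' × 𝒴))) (1, (v, y)))
      = ∑ v, ∑ y, Real.sqrt (Aker p K T V 0 v y * Aker p K T V 1 v y) := by
        refine Finset.sum_congr rfl fun v _ => Finset.sum_congr rfl fun y _ => ?_
        rw [dist_joint_eq, dist_joint_eq]
    _ ≤ ∑ v, Real.sqrt ((∑ y, Aker p K T V 0 v y) * (∑ y, Aker p K T V 1 v y)) := by
        refine Finset.sum_le_sum fun v _ => ?_
        exact sum_sqrt_mul_le _ _ (fun y => Aker_nonneg p hp K hK0 T V 0 v y)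
          (fun y => Aker_nonneg p hp K hK0 T V 1 v y)
    _ = ∑ v, Real.sqrt (dist p (fun ω => ((T ω, V ω) : ZMod 2 × 𝒱')) (0, v) *
          dist p (fun ω => ((T ω, V ω) : ZMod 2 × 𝒱')) (1, v)) := by
        refine Finset.sum_congr rfl fun v _ => ?_
        rw [dist_plain_eq p K hK1, dist_plain_eq p K hK1]

/-- Degrading the side-information channel can only increase `Z_B`;
equivalently the better channel has smaller `Z_B`. -/
lemma ZB_degrade_le (p : Ω → ℝ) (hp : ∀ ω, 0 ≤ p ω)
    (K₁ : Ω → 𝒴 → ℝ) (hK₁ : ∀ ω y, 0 ≤ K₁ ω y)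
    (Kt : 𝒴 → 𝒵 → ℝ) (hKt0 : ∀ y z, 0 ≤ Kt y z) (hKt1 : ∀ y, ∑ z, Kt y z = 1)
    (K₂ : Ω → 𝒵 → ℝ) (hK₂ : ∀ ω z, K₂ ω z = ∑ y, K₁ ω y * Kt y z)
    (T : Ω → ZMod 2) (V : Ω → 𝒱') :
    ZB (fun ωy : Ω × 𝒴 => p ωy.1 * K₁ ωy.1 ωy.2)
      (fun ωy => T ωy.1) (fun ωy => (V ωy.1, ωy.2)) ≤
    ZB (fun ωz : Ω × 𝒵 => p ωz.1 * K₂ ωz.1 ωz.2)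
      (fun ωz => T ωz.1) (fun ωz => (V ωz.1, ωz.2)) := by
  unfold ZB
  have h2 : (0:ℝ) ≤ 2 := by norm_num
  refine mul_le_mul_of_nonneg_left ?_ h2
  simp only [Fintype.sum_prod_type]
  refine Finset.sum_le_sum fun v _ => ?_
  have hA2 : ∀ (b : ZMod 2) (z : 𝒵),
      Aker p K₂ T V b v z = ∑ y, Aker p K₁ T V b v y * Kt y z := by
    intro b z
    unfold Aker
    calc (∑ ω, if T ω = b ∧ V ω = v then p ω * K₂ ω z else 0)
        = ∑ ω, ∑ y, (if T ω = b ∧ V ω = v then p ω * K₁ ω y else 0) * Kt y z := by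
          refine Finset.sum_congr rfl fun ω _ => ?_
          by_cases h : T ω = b ∧ V ω = v
          · simp only [if_pos h, hK₂, Finset.mul_sum]
            exact Finset.sum_congr rfl fun y _ => by ring
          · simp [if_neg h]
      _ = ∑ y, (∑ ω, if T ω = b ∧ V ω = v then p ω * K₁ ω y else 0) * Kt y z := by
          rw [Finset.sum_comm]
          refine Finset.sum_congr rfl fun y _ => ?_
          rw [Finset.sum_mul]
  calc ∑ y, Real.sqrt
        (dist (fun ωy : Ω × 𝒴 => p ωy.1 * K₁ ωy.1 ωy.2)
          (fun ωy => ((T ωy.1, (V ωy.1, ωy.2)) : ZMod 2 × (𝒱' × 𝒴))) (0, (v, y)) *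
         dist (fun ωy : Ω × 𝒴 => p ωy.1 * K₁ ωy.1 ωy.2)
          (fun ωy => ((T ωy.1, (V ωy.1, ωy.2)) : ZMod 2 × (𝒱' × 𝒴))) (1, (v, y)))
      = ∑ y, Real.sqrt (Aker p K₁ T V 0 v y * Aker p K₁ T V 1 v y) := by
        refine Finset.sum_congr rfl fun y _ => ?_
        rw [dist_joint_eq, dist_joint_eq]
    _ = ∑ y, Real.sqrt (Aker p K₁ T V 0 v y * Aker p K₁ T V 1 v y) * (∑ z, Kt y z) := by
        refine Finset.sum_congr rfl fun y _ => ?_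
        rw [hKt1, mul_one]
    _ = ∑ z, ∑ y, Real.sqrt ((Aker p K₁ T V 0 v y * Kt y z) *
          (Aker p K₁ T V 1 v y * Kt y z)) := by
        rw [Finset.sum_comm]
        refine Finset.sum_congr rfl fun y _ => ?_
        rw [Finset.mul_sum]
        refine Finset.sum_congr rfl fun z _ => ?_
        have : (Aker p K₁ T V 0 v y * Kt y z) * (Aker p K₁ T V 1 v y * Kt y z) =
            (Aker p K₁ T V 0 v y * Aker p K₁ T V 1 v y) * (Kt y z) ^ 2 := by ring
        rw [this, Real.sqrt_mul (mul_nonneg (Aker_nonneg p hp K₁ hK₁ T V 0 v y)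
          (Aker_nonneg p hp K₁ hK₁ T V 1 v y)), Real.sqrt_sq (hKt0 y z)]
    _ ≤ ∑ z, Real.sqrt ((∑ y, Aker p K₁ T V 0 v y * Kt y z) *
          (∑ y, Aker p K₁ T V 1 v y * Kt y z)) := by
        refine Finset.sum_le_sum fun z _ => ?_
        exact sum_sqrt_mul_le _ _
          (fun y => mul_nonneg (Aker_nonneg p hp K₁ hK₁ T V 0 v y) (hKt0 y z))
          (fun y => mul_nonneg (Aker_nonneg p hp K₁ hK₁ T V 1 v y) (hKt0 y z))
    _ = ∑ z, Real.sqrt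
        (dist (fun ωz : Ω × 𝒵 => p ωz.1 * K₂ ωz.1 ωz.2)
          (fun ωz => ((T ωz.1, (V ωz.1, ωz.2)) : ZMod 2 × (𝒱' × 𝒵))) (0, (v, z)) *
         dist (fun ωz : Ω × 𝒵 => p ωz.1 * K₂ ωz.1 ωz.2)
          (fun ωz => ((T ωz.1, (V ωz.1, ωz.2)) : ZMod 2 × (𝒱' × 𝒵))) (1, (v, z))) := by
        refine Finset.sum_congr rfl fun z _ => ?_
        rw [dist_joint_eq, dist_joint_eq, hA2, hA2]

end Master

/-- **Inclusion chain of the low-Bhattacharyya sets.**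
Let `W₁ : 𝒳 → 𝒴` and `W₂ : 𝒳 → 𝒵` be DMCs with `W₂ ⪯ W₁` and common input
distribution `P_X` in the multilevel polar construction with block length
`N = 2^n` and threshold `δ_N = 2^{−N^β}`.  Then `𝓛_X ⊆ 𝓛_{X|Z} ⊆ 𝓛_{X|Y}`. -/
theorem Lset_subset_chain {𝒳 𝒴 𝒵 : Type*} [Fintype 𝒳] [Fintype 𝒴] [Fintype 𝒵]
    {q : ℕ} (f : (Fin q → ZMod 2) ≃ 𝒳) (PX : 𝒳 → ℝ) (hPX : IsPMF PX)
    (W₁ : 𝒳 → 𝒴 → ℝ) (W₂ : 𝒳 → 𝒵 → ℝ)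
    (hW₁ : IsChannel W₁) (hW₂ : IsChannel W₂) (hdeg : Degraded W₂ W₁)
    (β : ℝ) (hβ0 : 0 < β) (hβ : β < 1 / 2) (n : ℕ) :
    Lplain PX f β n ⊆ Lout PX W₂ f β n ∧ Lout PX W₂ f β n ⊆ Lout PX W₁ f β n := by
  obtain ⟨Wt, hWt, hdegeq⟩ := hdeg
  constructor
  · rintro ⟨l, i⟩ hmem
    have hle : ZBout PX W₂ f n l i ≤ ZBplain PX f n l i := by
      exact ZB_cond_le (codeX PX n)
        (fun x => Finset.prod_nonneg fun j _ => hPX.1 (x j))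
        (fun (x : Fin (2 ^ n) → 𝒳) (z : Fin (2 ^ n) → 𝒵) => ∏ j, W₂ (x j) (z j))
        (fun x z => Finset.prod_nonneg fun j _ => hW₂.1 (x j) (z j))
        (fun x => prodK_sum_one W₂ hW₂.2 n x)
        (fun x => Ubit f n x l i) (fun x => Vval f n x l i)
    exact lt_of_le_of_lt hle hmem
  · rintro ⟨l, i⟩ hmem
    have hle : ZBout PX W₁ f n l i ≤ ZBout PX W₂ f n l i := by
      exact ZB_degrade_le (codeX PX n)
        (fun x => Finset.prod_nonneg fun j _ => hPX.1 (x j))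
        (fun (x : Fin (2 ^ n) → 𝒳) (y : Fin (2 ^ n) → 𝒴) => ∏ j, W₁ (x j) (y j))
        (fun x y => Finset.prod_nonneg fun j _ => hW₁.1 (x j) (y j))
        (fun (y : Fin (2 ^ n) → 𝒴) (z : Fin (2 ^ n) → 𝒵) => ∏ j, Wt (y j) (z j))
        (fun y z => Finset.prod_nonneg fun j _ => hWt.1 (y j) (z j))
        (fun y => prodK_sum_one Wt hWt.2 n y)
        (fun (x : Fin (2 ^ n) → 𝒳) (z : Fin (2 ^ n) → 𝒵) => ∏ j, W₂ (x j) (z j))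
        (fun x z => prod_sum_degrade W₁ Wt W₂ hdegeq n x z)
        (fun x => Ubit f n x l i) (fun x => Vval f n x l i)
    exact lt_of_le_of_lt hle hmem

end PolarWiretap

end
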